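/- Let x = (x^R, x^G, x^B) and x̃ = (x̃^R, x̃^G, x̃^B) be three-channel images on an n×m grid with all entries nonnegative, normalized so that the total mass over all channels is 1, and such that the per-channel masses agree: Σ_{i,j} x^K_{i,j} = Σ_{i,j} x̃^K_{i,j} for each channel K ∈ {R, G, B}. Define the channel-restricted 1-Wasserstein distance W₁^{res}(x, x̃) as the minimum of Σ Π_{p,q}·c(p,q) over block-diagonal couplings Π (couplings whose entries between positions of different channels are zero, with row sums x and column sums x̃), where the cost c between two positions in the same channel is the L1 distance |i−i'| + |j−j'|. Then W₁^{res}(x, x̃) = Σ_{K ∈ {R,G,B}} min{ ‖δ^K‖₁ : δ^K a local flow plan with Δ(x^K, δ^K) = x̃^K }. -/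

import Mathlib

noncomputable section

open Finset MeasureTheory

/-- Grid positions of an `n × m` image (0-based indexing). -/
abbrev Pos (n m : ℕ) := Fin n × Fin m

/-- A normalized distribution: nonnegative entries summing to one. -/
def IsNormalized {n m : ℕ} (x : Fin n → Fin m → ℝ) : Prop :=
  (∀ i j, 0 ≤ x i j) ∧ (∑ i, ∑ j, x i j) = 1

/-- `Π` is a coupling of `x` and `x'`. -/
def IsCoupling {n m : ℕ} (x x' : Fin n → Fin m → ℝ)
    (P : Pos n m → Pos n m → ℝ) : Prop :=
  (∀ p q, 0 ≤ P p q) ∧ (∀ p, (∑ q, P p q) = x p.1 p.2) ∧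
    (∀ q, (∑ p, P p q) = x' q.1 q.2)

/-- Transport cost of a plan `P` with ground metric `d`. -/
def transportCost {n m : ℕ} (d : Pos n m → Pos n m → ℝ)
    (P : Pos n m → Pos n m → ℝ) : ℝ :=
  ∑ p, ∑ q, P p q * d p q

/-- 1-Wasserstein distance with ground metric `d`. -/
def wassersteinD {n m : ℕ} (d : Pos n m → Pos n m → ℝ)
    (x x' : Fin n → Fin m → ℝ) : ℝ :=
  sInf {c | ∃ P, IsCoupling x x' P ∧ transportCost d P = c}

/-- The `L1` ground metric on pixel positions. -/
def groundL1 {n m : ℕ} (p q : Pos n m) : ℝ :=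
  |((p.1 : ℕ) : ℝ) - ((q.1 : ℕ) : ℝ)| + |((p.2 : ℕ) : ℝ) - ((q.2 : ℕ) : ℝ)|

/-- The `L2` ground metric on pixel positions. -/
def groundL2 {n m : ℕ} (p q : Pos n m) : ℝ :=
  Real.sqrt ((((p.1 : ℕ) : ℝ) - ((q.1 : ℕ) : ℝ)) ^ 2 +
    (((p.2 : ℕ) : ℝ) - ((q.2 : ℕ) : ℝ)) ^ 2)

/-- 1-Wasserstein distance with the `L1` ground metric. -/
def W1 {n m : ℕ} (x x' : Fin n → Fin m → ℝ) : ℝ := wassersteinD groundL1 x x'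

/-- Value of the vertical part of a flow plan at integer indices,
zero out of range. -/
def padV {n m : ℕ} (δv : Fin (n - 1) → Fin m → ℝ) (a b : ℤ) : ℝ :=
  ∑ i : Fin (n - 1), ∑ j : Fin m,
    if ((i : ℕ) : ℤ) = a ∧ ((j : ℕ) : ℤ) = b then δv i j else 0

/-- Value of the horizontal part of a flow plan at integer indices,
zero out of range. -/
def padH {n m : ℕ} (δh : Fin n → Fin (m - 1) → ℝ) (a b : ℤ) : ℝ :=
  ∑ i : Fin n, ∑ j : Fin (m - 1),
    if ((i : ℕ) : ℤ) = a ∧ ((j : ℕ) : ℤ) = b then δh i j else 0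

/-- Application `Δ(x, δ)` of a local flow plan `δ = (δv, δh)` to an image `x`. -/
def applyFlow {n m : ℕ} (x : Fin n → Fin m → ℝ) (δv : Fin (n - 1) → Fin m → ℝ)
    (δh : Fin n → Fin (m - 1) → ℝ) : Fin n → Fin m → ℝ :=
  fun i j =>
    x i j + padV δv (((i : ℕ) : ℤ) - 1) ((j : ℕ) : ℤ) - padV δv ((i : ℕ) : ℤ) ((j : ℕ) : ℤ)
      + padH δh ((i : ℕ) : ℤ) (((j : ℕ) : ℤ) - 1) - padH δh ((i : ℕ) : ℤ) ((j : ℕ) : ℤ)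

/-- `L1` norm of a local flow plan. -/
def flowNorm {n m : ℕ} (δv : Fin (n - 1) → Fin m → ℝ)
    (δh : Fin n → Fin (m - 1) → ℝ) : ℝ :=
  (∑ i, ∑ j, |δv i j|) + (∑ i, ∑ j, |δh i j|)

/-- Lower endpoint of a vertical edge. -/
def vlow {n : ℕ} (i : Fin (n - 1)) : Fin n := ⟨i, by have := i.isLt; omega⟩

/-- Upper endpoint of a vertical edge. -/
def vhigh {n : ℕ} (i : Fin (n - 1)) : Fin n := ⟨i + 1, by have := i.isLt; omega⟩

/-- Left endpoint of a horizontal edge. -/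
def hlow {m : ℕ} (j : Fin (m - 1)) : Fin m := ⟨j, by have := j.isLt; omega⟩

/-- Right endpoint of a horizontal edge. -/
def hhigh {m : ℕ} (j : Fin (m - 1)) : Fin m := ⟨j + 1, by have := j.isLt; omega⟩

/-- The neighbors of a position: positions at `L1` distance exactly one. -/
def nbrs {n m : ℕ} (p : Pos n m) : Finset (Pos n m) :=
  Finset.univ.filter fun q =>
    (((p.1 : ℕ) : ℤ) - ((q.1 : ℕ) : ℤ)).natAbs +
      (((p.2 : ℕ) : ℤ) - ((q.2 : ℕ) : ℤ)).natAbs = 1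

/-- Index set for coordinates of local flow plans: `r = (n-1)m + n(m-1)`. -/
abbrev FlowIdx (n m : ℕ) := (Fin (n - 1) × Fin m) ⊕ (Fin n × Fin (m - 1))

/-- Vertical part of a flow-domain vector. -/
def vPart {n m : ℕ} (δ : FlowIdx n m → ℝ) : Fin (n - 1) → Fin m → ℝ :=
  fun i j => δ (Sum.inl (i, j))

/-- Horizontal part of a flow-domain vector. -/
def hPart {n m : ℕ} (δ : FlowIdx n m → ℝ) : Fin n → Fin (m - 1) → ℝ :=
  fun i j => δ (Sum.inr (i, j))

/-- The Laplace distribution with mean `0` and standard deviation `σ`. -/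
def laplaceM (σ : ℝ) : Measure ℝ :=
  volume.withDensity fun t =>
    ENNReal.ofReal ((Real.sqrt 2 * σ)⁻¹ * Real.exp (-(Real.sqrt 2 * |t|) / σ))

/-- Product of i.i.d. Laplace noise over the flow domain. -/
def flowNoise (n m : ℕ) (σ : ℝ) : Measure (FlowIdx n m → ℝ) :=
  Measure.pi fun _ => laplaceM σ

/-- The Wasserstein-smoothed classifier. -/
def smoothed {n m k : ℕ} (σ : ℝ) (f : (Fin n → Fin m → ℝ) → Fin k → ℝ)
    (x : Fin n → Fin m → ℝ) (i : Fin k) : ℝ :=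
  ∫ δ, f (applyFlow x (vPart δ) (hPart δ)) i ∂(flowNoise n m σ)

/-- `Π` is a channel-restricted coupling of the three-channel images `x` and
`x̃`: nonnegative, with row sums `x`, column sums `x̃`, and no transport
between distinct channels. -/
def IsCouplingC {n m : ℕ} (x xt : Fin 3 → Fin n → Fin m → ℝ)
    (P : (Fin 3 × Pos n m) → (Fin 3 × Pos n m) → ℝ) : Prop :=
  (∀ p q, 0 ≤ P p q) ∧ (∀ p, (∑ q, P p q) = x p.1 p.2.1 p.2.2) ∧
    (∀ q, (∑ p, P p q) = xt q.1 q.2.1 q.2.2) ∧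
    (∀ p q, p.1 ≠ q.1 → P p q = 0)

/-- The channel-restricted 1-Wasserstein distance between three-channel
images, with `L1` ground metric within each channel. -/
def W1res {n m : ℕ} (x xt : Fin 3 → Fin n → Fin m → ℝ) : ℝ :=
  sInf {c | ∃ P, IsCouplingC x xt P ∧
    (∑ p, ∑ q, P p q * groundL1 p.2 q.2) = c}

/-!
In one channel the two minima agree. A coupling `P` yields a flow plan: each unit of mass sent
from `p` to `q` is routed along a monotone lattice path, whose length is `|p - q|₁`. Conversely,
the positive and negative parts of a flow plan `δ` form a nonnegative flow `F` on ordered pairs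
of pixels with cost `‖δ‖₁`. Eliminating the pixels one at a time, by shortcutting the flow along
every path `p → v → r` to `p → r` in the same proportion, keeps the net inflows and, by the
triangle inequality, does not increase the cost; afterwards every pixel is a pure source or a
pure sink, and `F` plus the mass that stays put is a coupling. Across channels, a
channel-restricted coupling is a block-diagonal matrix of per-channel couplings, so `W₁ʳᵉˢ` is
the sum of the per-channel distances.
-/

section Transport

variable {V : Type*} [Fintype V]

def IsTransportPlan (μ ν : V → ℝ) (P : V → V → ℝ) : Prop :=
  (∀ p q, 0 ≤ P p q) ∧ (∀ p, ∑ q, P p q = μ p) ∧ ∀ q, ∑ p, P p q = ν q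

def totalCost (d F : V → V → ℝ) : ℝ := ∑ p, ∑ q, F p q * d p q

def inflow (F : V → V → ℝ) (v : V) : ℝ := ∑ p, F p v

def outflow (F : V → V → ℝ) (v : V) : ℝ := ∑ r, F v r

def netInflow (F : V → V → ℝ) (v : V) : ℝ := inflow F v - outflow F v

def IsSourceOrSink (F : V → V → ℝ) (v : V) : Prop := (∀ p, F p v = 0) ∨ ∀ r, F v r = 0

theorem exists_isTransportPlan {μ ν : V → ℝ} (hμ : ∀ p, 0 ≤ μ p) (hν : ∀ q, 0 ≤ ν q)
    (hmass : ∑ p, μ p = ∑ q, ν q) : ∃ P, IsTransportPlan μ ν P := by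
  by_cases h0 : ∑ p, μ p = 0
  · have hμ0 := (sum_eq_zero_iff_of_nonneg fun p _ => hμ p).1 h0
    have hν0 := (sum_eq_zero_iff_of_nonneg fun q _ => hν q).1 (hmass ▸ h0)
    exact ⟨0, fun _ _ => le_rfl, fun p => by simp [hμ0 p], fun q => by simp [hν0 q]⟩
  · refine ⟨fun p q => μ p * ν q / ∑ r, μ r, fun p q =>
      div_nonneg (mul_nonneg (hμ p) (hν q)) (sum_nonneg fun r _ => hμ r),
      fun p => ?_, fun q => ?_⟩
    · rw [← sum_div, ← mul_sum, ← hmass, mul_div_cancel_right₀ _ h0]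
    · rw [← sum_div, ← sum_mul, mul_div_cancel_left₀ _ h0]

theorem netInflow_add (F G : V → V → ℝ) : netInflow (F + G) = netInflow F + netInflow G := by
  funext v
  simp only [netInflow, inflow, outflow, Pi.add_apply, sum_add_distrib]
  ring

theorem isSourceOrSink_of_inflow_eq_zero_or {F : V → V → ℝ} (hF : ∀ p r, 0 ≤ F p r) {v : V}
    (h : inflow F v = 0 ∨ outflow F v = 0) : IsSourceOrSink F v := by
  rcases h with h | h
  · exact Or.inl fun p => (sum_eq_zero_iff_of_nonneg fun p _ => hF p v).1 h p (mem_univ p)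
  · exact Or.inr fun r => (sum_eq_zero_iff_of_nonneg fun r _ => hF v r).1 h r (mem_univ r)

structure IsRerouting (d F G : V → V → ℝ) : Prop where
  nonneg : ∀ p r, 0 ≤ G p r
  netInflow_eq : netInflow G = netInflow F
  totalCost_le : totalCost d G ≤ totalCost d F
  isSourceOrSink : ∀ v, IsSourceOrSink F v → IsSourceOrSink G v

theorem IsRerouting.refl {d F : V → V → ℝ} (hF : ∀ p r, 0 ≤ F p r) : IsRerouting d F F :=
  ⟨hF, rfl, le_rfl, fun _ h => h⟩

theorem IsRerouting.trans {d F G H : V → V → ℝ} (hFG : IsRerouting d F G)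
    (hGH : IsRerouting d G H) : IsRerouting d F H :=
  ⟨hGH.nonneg, hGH.netInflow_eq.trans hFG.netInflow_eq,
    hGH.totalCost_le.trans hFG.totalCost_le,
    fun v h => hGH.isSourceOrSink v (hFG.isSourceOrSink v h)⟩

variable [DecidableEq V]

theorem isRerouting_offDiag {d F : V → V → ℝ} (hd : ∀ p, d p p = 0)
    (hF : ∀ p r, 0 ≤ F p r) :
    IsRerouting d F fun p r => if p = r then 0 else F p r := by
  refine ⟨fun p r => ?_, funext fun v => ?_, le_of_eq ?_, fun v hv => ?_⟩
  · split_ifs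
    exacts [le_rfl, hF p r]
  · simp only [netInflow, inflow, outflow, sum_ite, filter_eq', filter_ne', filter_eq,
      filter_ne, mem_univ, if_true, sum_const_zero, zero_add]
    rw [sum_erase_eq_sub (mem_univ v), sum_erase_eq_sub (mem_univ v)]
    ring
  · refine sum_congr rfl fun p _ => sum_congr rfl fun r _ => ?_
    dsimp only
    split_ifs with h
    · simp [h, hd]
    · rfl
  · rcases hv with hv | hv
    · exact Or.inl fun p => by simp [hv p]
    · exact Or.inr fun r => by simp [hv r]

/-- Removes the amount `s` from both the inflow and the outflow of `q`, shortcutting the paths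
`p → q → r` to `p → r` in proportion to `F p q * F q r`. -/
def shortcut (F : V → V → ℝ) (q : V) (s : ℝ) (p r : V) : ℝ :=
  F p r + s / (inflow F q * outflow F q) * F p q * F q r
    - s / inflow F q * (if r = q then F p q else 0)
    - s / outflow F q * (if p = q then F q r else 0)

section Shortcut

variable {F : V → V → ℝ} {q : V} {s : ℝ}

theorem shortcut_nonneg (hF : ∀ p r, 0 ≤ F p r) (hq : F q q = 0) (hs : 0 ≤ s)
    (hsI : s ≤ inflow F q) (hsO : s ≤ outflow F q) (p r : V) : 0 ≤ shortcut F q s p r := by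
  have hc : 0 ≤ s / (inflow F q * outflow F q) * F p q * F q r := by
    have := hs.trans hsI
    have := hs.trans hsO
    positivity [hF p q, hF q r]
  have hαI : s / inflow F q ≤ 1 := div_le_one_of_le₀ hsI (hs.trans hsI)
  have hαO : s / outflow F q ≤ 1 := div_le_one_of_le₀ hsO (hs.trans hsO)
  by_cases hr : r = q <;> by_cases hp : p = q
  · subst hr hp
    simp [shortcut, hq]
  · subst hr
    simp only [shortcut, if_neg hp, hq, ↓reduceIte, mul_zero, sub_zero, add_zero]
    nlinarith [mul_nonneg (hF p r) (sub_nonneg.2 hαI)]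
  · subst hp
    simp only [shortcut, if_neg hr, hq, ↓reduceIte, mul_zero, zero_mul, sub_zero, add_zero]
    nlinarith [mul_nonneg (hF p r) (sub_nonneg.2 hαO)]
  · simp only [shortcut, if_neg hr, if_neg hp]
    linarith [hF p r]

theorem inflow_shortcut_self (hq : F q q = 0) (hI : inflow F q ≠ 0) (hO : outflow F q ≠ 0) :
    inflow (shortcut F q s) q = inflow F q - s := by
  simp only [inflow, shortcut, sum_add_distrib, sum_sub_distrib, ← sum_mul, ← mul_sum,
    sum_ite_eq', mem_univ, if_true, hq] at hI ⊢
  field_simp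
  ring

theorem outflow_shortcut_self (hq : F q q = 0) (hI : inflow F q ≠ 0) (hO : outflow F q ≠ 0) :
    outflow (shortcut F q s) q = outflow F q - s := by
  simp only [outflow, shortcut, sum_add_distrib, sum_sub_distrib, ← mul_sum, sum_ite_eq',
    mem_univ, if_true, hq] at hO ⊢
  field_simp
  ring

theorem netInflow_shortcut (hq : F q q = 0) (hI : inflow F q ≠ 0) (hO : outflow F q ≠ 0) :
    netInflow (shortcut F q s) = netInflow F := by
  funext v
  by_cases hv : v = q
  · subst hv
    simp only [netInflow, inflow_shortcut_self hq hI hO, outflow_shortcut_self hq hI hO]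
    ring
  · simp only [netInflow, inflow, outflow, shortcut, sum_add_distrib, sum_sub_distrib,
      ← sum_mul, ← mul_sum, sum_ite_eq', mem_univ, if_neg hv, ↓reduceIte, mul_zero,
      sub_zero] at hI hO ⊢
    field_simp
    ring

theorem totalCost_shortcut_le {d : V → V → ℝ} (htri : ∀ a b c, d a c ≤ d a b + d b c)
    (hF : ∀ p r, 0 ≤ F p r) (hI : 0 < inflow F q) (hO : 0 < outflow F q) (hs : 0 ≤ s) :
    totalCost d (shortcut F q s) ≤ totalCost d F := by
  set I := inflow F q
  set O := outflow F q
  have hpath : ∑ p, ∑ r, F p q * F q r * d p r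
      ≤ O * ∑ p, F p q * d p q + I * ∑ r, F q r * d q r := calc
    _ ≤ ∑ p, ∑ r, F p q * F q r * (d p q + d q r) := by
      gcongr with p _ r _
      exacts [mul_nonneg (hF p q) (hF q r), htri p q r]
    _ = _ := by
      simp only [mul_add, sum_add_distrib, O, I, inflow, outflow, mul_sum, sum_mul]
      congr 1
      · exact sum_congr rfl fun _ _ => sum_congr rfl fun _ _ => by ring
      · rw [sum_comm]
        exact sum_congr rfl fun _ _ => sum_congr rfl fun _ _ => by ring
  have hcost : totalCost d (shortcut F q s) = totalCost d F
      + s / (I * O) * ∑ p, ∑ r, F p q * F q r * d p r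
      - s / I * ∑ p, F p q * d p q - s / O * ∑ r, F q r * d q r := by
    simp only [totalCost, shortcut, add_mul, sub_mul, sum_add_distrib, sum_sub_distrib,
      mul_assoc, ← mul_sum, ite_mul, zero_mul, mul_ite, mul_zero, sum_ite_eq', sum_ite_irrel,
      sum_const_zero, mem_univ, ↓reduceIte, I, O]
  have hIO : s / (I * O) * (O * ∑ p, F p q * d p q + I * ∑ r, F q r * d q r)
      = s / I * ∑ p, F p q * d p q + s / O * ∑ r, F q r * d q r := by
    field_simp
  rw [hcost]
  nlinarith [mul_le_mul_of_nonneg_left hpath (by positivity : 0 ≤ s / (I * O))]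

theorem IsSourceOrSink.shortcut {v : V} (hI : inflow F q ≠ 0) (hO : outflow F q ≠ 0)
    (hv : IsSourceOrSink F v) : IsSourceOrSink (shortcut F q s) v := by
  rcases hv with hv | hv
  · have hvq : v ≠ q := by
      rintro rfl
      exact hI (sum_eq_zero fun p _ => hv p)
    exact Or.inl fun p => by simp [_root_.shortcut, hv, hvq]
  · have hvq : v ≠ q := by
      rintro rfl
      exact hO (sum_eq_zero fun r _ => hv r)
    exact Or.inr fun r => by simp [_root_.shortcut, hv, hvq]

end Shortcut

theorem exists_isRerouting_isSourceOrSink {d F : V → V → ℝ}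
    (htri : ∀ a b c, d a c ≤ d a b + d b c) (hF : ∀ p r, 0 ≤ F p r) {q : V} (hq : F q q = 0) :
    ∃ G, IsRerouting d F G ∧ IsSourceOrSink G q := by
  by_cases h0 : inflow F q = 0 ∨ outflow F q = 0
  · exact ⟨F, .refl hF, isSourceOrSink_of_inflow_eq_zero_or hF h0⟩
  rw [not_or] at h0
  have hI : 0 < inflow F q := lt_of_le_of_ne (sum_nonneg fun p _ => hF p q) (Ne.symm h0.1)
  have hO : 0 < outflow F q := lt_of_le_of_ne (sum_nonneg fun r _ => hF q r) (Ne.symm h0.2)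
  set s := min (inflow F q) (outflow F q)
  have hs : 0 ≤ s := le_min hI.le hO.le
  have hG := shortcut_nonneg hF hq hs (min_le_left _ _) (min_le_right _ _)
  refine ⟨shortcut F q s, ⟨hG, netInflow_shortcut hq h0.1 h0.2,
    totalCost_shortcut_le htri hF hI hO hs, fun v => IsSourceOrSink.shortcut h0.1 h0.2⟩,
    isSourceOrSink_of_inflow_eq_zero_or hG ?_⟩
  rw [inflow_shortcut_self hq h0.1 h0.2, outflow_shortcut_self hq h0.1 h0.2, sub_eq_zero,
    sub_eq_zero]
  exact (min_choice _ _).imp Eq.symm Eq.symm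

theorem exists_isRerouting_forall_isSourceOrSink {d F : V → V → ℝ} (hd : ∀ p, d p p = 0)
    (htri : ∀ a b c, d a c ≤ d a b + d b c) (hF : ∀ p r, 0 ≤ F p r) :
    ∃ G, IsRerouting d F G ∧ ∀ v, IsSourceOrSink G v := by
  suffices ∀ T : Finset V, ∃ G, IsRerouting d F G ∧ ∀ v ∈ T, IsSourceOrSink G v by
    obtain ⟨G, hFG, hG⟩ := this univ
    exact ⟨G, hFG, fun v => hG v (mem_univ v)⟩
  intro T
  induction T using Finset.induction_on with
  | empty => exact ⟨F, .refl hF, by simp⟩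
  | insert q T _ ih =>
    obtain ⟨G, hFG, hG⟩ := ih
    have hG₀ := isRerouting_offDiag hd hFG.nonneg
    obtain ⟨H, hH, hHq⟩ := exists_isRerouting_isSourceOrSink htri hG₀.nonneg (q := q) (by simp)
    refine ⟨H, hFG.trans (hG₀.trans hH), ?_⟩
    simp only [mem_insert, forall_eq_or_imp]
    exact ⟨hHq, fun v hv => hH.isSourceOrSink v (hG₀.isSourceOrSink v (hG v hv))⟩

theorem exists_isTransportPlan_of_forall_isSourceOrSink {d F : V → V → ℝ} {μ ν : V → ℝ}
    (hd : ∀ p, d p p = 0) (hF : ∀ p r, 0 ≤ F p r) (hsrc : ∀ v, IsSourceOrSink F v)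
    (hμ : ∀ p, 0 ≤ μ p) (hν : ∀ q, 0 ≤ ν q) (hνμ : μ + netInflow F = ν) :
    ∃ P, IsTransportPlan μ ν P ∧ totalCost d P = totalCost d F := by
  refine ⟨fun p r => F p r + if p = r then μ p - outflow F p else 0,
    ⟨fun p r => ?_, fun p => ?_, fun r => ?_⟩, ?_⟩
  · dsimp only
    split_ifs with hpr
    · subst hpr
      have hνp : μ p + (inflow F p - outflow F p) = ν p := congrFun hνμ p
      rcases hsrc p with h | h
      · have : inflow F p = 0 := sum_eq_zero fun r _ => h r
        linarith [hν p, hF p p]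
      · have : outflow F p = 0 := sum_eq_zero fun r _ => h r
        linarith [hμ p, hF p p]
    · simpa using hF p r
  · simp [sum_add_distrib, outflow]
  · have hνr : μ r + (inflow F r - outflow F r) = ν r := congrFun hνμ r
    simp only [sum_add_distrib, sum_ite_eq', mem_univ, ↓reduceIte]
    simp only [inflow] at hνr
    linarith
  · simp [totalCost, add_mul, sum_add_distrib, ite_mul, hd]

theorem exists_isTransportPlan_totalCost_le {d F : V → V → ℝ} {μ ν : V → ℝ}
    (hd : ∀ p, d p p = 0) (htri : ∀ a b c, d a c ≤ d a b + d b c) (hF : ∀ p r, 0 ≤ F p r)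
    (hμ : ∀ p, 0 ≤ μ p) (hν : ∀ q, 0 ≤ ν q) (hνμ : μ + netInflow F = ν) :
    ∃ P, IsTransportPlan μ ν P ∧ totalCost d P ≤ totalCost d F := by
  obtain ⟨G, hFG, hG⟩ := exists_isRerouting_forall_isSourceOrSink hd htri hF
  obtain ⟨P, hP, hcost⟩ := exists_isTransportPlan_of_forall_isSourceOrSink hd hFG.nonneg hG hμ hν
    (by rwa [hFG.netInflow_eq])
  exact ⟨P, hP, hcost.trans_le hFG.totalCost_le⟩

end Transport

section Network

variable {V E : Type*} [Fintype E] [DecidableEq V] (tail head : E → V)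

def divergence : (E → ℝ) →ₗ[ℝ] V → ℝ :=
  Fintype.linearCombination ℝ fun e => Pi.single (head e) 1 - Pi.single (tail e) 1

theorem divergence_apply (f : E → ℝ) (v : V) :
    divergence tail head f v =
      ∑ e, f e * ((if v = head e then 1 else 0) - if v = tail e then 1 else 0) := by
  simp [divergence, Fintype.linearCombination_apply, Finset.sum_apply, Pi.single_apply]

theorem divergence_swap (f : E → ℝ) : divergence head tail f = -divergence tail head f := by
  funext v
  simp only [divergence_apply, Pi.neg_apply, ← sum_neg_distrib]
  exact sum_congr rfl fun e _ => by ring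

def edgeMatrix (φ : E → ℝ) (p r : V) : ℝ :=
  ∑ e, if tail e = p ∧ head e = r then φ e else 0

theorem netInflow_edgeMatrix [Fintype V] (φ : E → ℝ) :
    netInflow (edgeMatrix tail head φ) = divergence tail head φ := by
  funext v
  simp only [netInflow, inflow, outflow, edgeMatrix, divergence_apply]
  rw [sum_comm, sum_comm (γ := V)]
  simp [ite_and, mul_sub, sum_sub_distrib, sum_ite_eq', eq_comm]

theorem totalCost_edgeMatrix [Fintype V] (d : V → V → ℝ) (φ : E → ℝ) :
    totalCost d (edgeMatrix tail head φ) = ∑ e, φ e * d (tail e) (head e) := by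
  simp only [totalCost, edgeMatrix, sum_mul, ite_mul, zero_mul]
  rw [sum_congr rfl fun p _ => sum_comm, sum_comm]
  simp [ite_and, sum_ite_eq]

end Network

section Flows

variable {V E : Type*} [Fintype E] [DecidableEq V] {tail head : E → V}

theorem exists_divergence_eq_single_sub_single [DecidableEq E] (D : V → V → ℕ)
    (hstep : ∀ p q, p ≠ q → ∃ e,
      (tail e = p ∧ D (head e) q < D p q) ∨ (head e = p ∧ D (tail e) q < D p q))
    (p q : V) : ∃ f : E → ℝ,
      divergence tail head f = Pi.single q 1 - Pi.single p 1 ∧ ∑ e, |f e| ≤ D p q := by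
  induction hk : D p q using Nat.strong_induction_on generalizing p with
  | _ k ih =>
  by_cases hpq : p = q
  · exact ⟨0, by simp [hpq], by simp⟩
  obtain ⟨e, p', c, hc, hdiv, hlt⟩ : ∃ (e : E) (p' : V) (c : ℝ), |c| = 1 ∧
      c • (Pi.single (head e) 1 - Pi.single (tail e) 1 : V → ℝ) =
        Pi.single p' 1 - Pi.single p 1 ∧ D p' q < k := by
    obtain ⟨e, ⟨rfl, hlt⟩ | ⟨rfl, hlt⟩⟩ := hstep p q hpq
    · exact ⟨e, head e, 1, abs_one, one_smul _ _, hk ▸ hlt⟩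
    · exact ⟨e, tail e, -1, by simp, by simp, hk ▸ hlt⟩
  obtain ⟨f, hf, hfk⟩ := ih _ hlt p' rfl
  refine ⟨f + Pi.single e c, ?_, ?_⟩
  · rw [map_add, hf, divergence, Fintype.linearCombination_apply_single, hdiv]
    abel
  · calc ∑ e', |(f + Pi.single e c : E → ℝ) e'|
        ≤ ∑ e', |f e'| + ∑ e', |(Pi.single e c : E → ℝ) e'| := by
          rw [← sum_add_distrib]
          exact sum_le_sum fun e' _ => abs_add_le (f e') _
      _ ≤ D p' q + 1 := by
          gcongr
          simp [Pi.single_apply, apply_ite, hc]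
      _ ≤ k := by exact_mod_cast hlt

variable [Fintype V]

theorem exists_add_divergence_of_isTransportPlan {d : V → V → ℝ}
    (hunit : ∀ p q, ∃ f : E → ℝ,
      divergence tail head f = Pi.single q 1 - Pi.single p 1 ∧ ∑ e, |f e| ≤ d p q)
    {μ ν : V → ℝ} {P : V → V → ℝ} (hP : IsTransportPlan μ ν P) :
    ∃ δ, μ + divergence tail head δ = ν ∧ ∑ e, |δ e| ≤ totalCost d P := by
  choose f hf hfd using hunit
  obtain ⟨hP0, hrow, hcol⟩ := hP
  refine ⟨∑ p, ∑ q, P p q • f p q, ?_, ?_⟩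
  · funext v
    simp only [map_sum, map_smul, hf, Pi.add_apply, Finset.sum_apply, Pi.smul_apply,
      Pi.sub_apply, Pi.single_apply, smul_eq_mul, mul_sub, sum_sub_distrib, mul_ite, mul_one,
      mul_zero, sum_ite_eq, sum_ite_irrel, mem_univ, ↓reduceIte, sum_const_zero]
    rw [hcol, hrow]
    ring
  · calc ∑ e, |(∑ p, ∑ q, P p q • f p q) e|
        ≤ ∑ e, ∑ p, ∑ q, P p q * |f p q e| := by
          refine sum_le_sum fun e _ => ?_
          simp only [Finset.sum_apply, Pi.smul_apply, smul_eq_mul]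
          refine (abs_sum_le_sum_abs _ _).trans (sum_le_sum fun p _ => ?_)
          refine (abs_sum_le_sum_abs _ _).trans_eq (sum_congr rfl fun q _ => ?_)
          rw [abs_mul, abs_of_nonneg (hP0 p q)]
      _ = ∑ p, ∑ q, P p q * ∑ e, |f p q e| := by
          simp only [mul_sum]
          rw [sum_comm]
          exact sum_congr rfl fun p _ => sum_comm
      _ ≤ totalCost d P := by
          unfold totalCost
          gcongr with p _ q _
          exacts [hP0 p q, hfd p q]

theorem exists_isTransportPlan_of_add_divergence {d : V → V → ℝ} (hd : ∀ p, d p p = 0)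
    (htri : ∀ a b c, d a c ≤ d a b + d b c) (hsymm : ∀ p q, d p q = d q p)
    (hedge : ∀ e, d (tail e) (head e) ≤ 1) {μ ν : V → ℝ} (hμ : ∀ p, 0 ≤ μ p)
    (hν : ∀ q, 0 ≤ ν q) {δ : E → ℝ} (hδ : μ + divergence tail head δ = ν) :
    ∃ P, IsTransportPlan μ ν P ∧ totalCost d P ≤ ∑ e, |δ e| := by
  set F := edgeMatrix tail head (fun e => (δ e)⁺) + edgeMatrix head tail (fun e => (δ e)⁻)
  have hF : ∀ p r, 0 ≤ F p r := fun p r =>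
    add_nonneg (sum_nonneg fun e _ => by split_ifs <;> simp [posPart_nonneg])
      (sum_nonneg fun e _ => by split_ifs <;> simp [negPart_nonneg])
  have hnet : μ + netInflow F = ν := by
    rw [← hδ, netInflow_add, netInflow_edgeMatrix, netInflow_edgeMatrix,
      divergence_swap tail head, ← sub_eq_add_neg, ← map_sub]
    congr
    exact funext fun e => posPart_sub_negPart (δ e)
  obtain ⟨P, hP, hcost⟩ := exists_isTransportPlan_totalCost_le hd htri hF hμ hν hnet
  refine ⟨P, hP, hcost.trans ?_⟩
  have hFcost : totalCost d F =
      ∑ e, ((δ e)⁺ * d (tail e) (head e) + (δ e)⁻ * d (head e) (tail e)) := by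
    rw [sum_add_distrib, ← totalCost_edgeMatrix, ← totalCost_edgeMatrix]
    simp only [totalCost, F, Pi.add_apply, add_mul, sum_add_distrib]
  rw [hFcost]
  refine sum_le_sum fun e _ => ?_
  rw [← posPart_add_negPart, hsymm (head e)]
  nlinarith [hedge e, posPart_nonneg (δ e), negPart_nonneg (δ e)]

end Flows

section Grid

variable {n m : ℕ}

def gridTail : FlowIdx n m → Pos n m :=
  Sum.elim (fun e => (vlow e.1, e.2)) fun e => (e.1, hlow e.2)

def gridHead : FlowIdx n m → Pos n m :=
  Sum.elim (fun e => (vhigh e.1, e.2)) fun e => (e.1, hhigh e.2)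

def gridFlow (δv : Fin (n - 1) → Fin m → ℝ) (δh : Fin n → Fin (m - 1) → ℝ) :
    FlowIdx n m → ℝ :=
  Sum.elim (Function.uncurry δv) (Function.uncurry δh)

theorem applyFlow_eq_add_divergence (y : Fin n → Fin m → ℝ) (δv : Fin (n - 1) → Fin m → ℝ)
    (δh : Fin n → Fin (m - 1) → ℝ) (i : Fin n) (j : Fin m) :
    applyFlow y δv δh i j = y i j + divergence gridTail gridHead (gridFlow δv δh) (i, j) := by
  simp only [applyFlow, padV, padH, divergence_apply, Fintype.sum_sum_type,
    Fintype.sum_prod_type, gridTail, gridHead, gridFlow, Sum.elim_inl, Sum.elim_inr,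
    Function.uncurry_apply_pair, Prod.mk.injEq]
  have hv : ∀ (k : Fin (n - 1)) (l : Fin m),
      δv k l * ((if i = vhigh k ∧ j = l then 1 else 0) - if i = vlow k ∧ j = l then 1 else 0) =
        (if ((k : ℕ) : ℤ) = (i : ℕ) - 1 ∧ ((l : ℕ) : ℤ) = (j : ℕ) then δv k l else 0) -
          if ((k : ℕ) : ℤ) = (i : ℕ) ∧ ((l : ℕ) : ℤ) = (j : ℕ) then δv k l else 0 := by
    intro k l
    simp only [vhigh, vlow, Fin.ext_iff]
    split_ifs <;> (try omega) <;> ring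
  have hh : ∀ (k : Fin n) (l : Fin (m - 1)),
      δh k l * ((if i = k ∧ j = hhigh l then 1 else 0) - if i = k ∧ j = hlow l then 1 else 0) =
        (if ((k : ℕ) : ℤ) = (i : ℕ) ∧ ((l : ℕ) : ℤ) = (j : ℕ) - 1 then δh k l else 0) -
          if ((k : ℕ) : ℤ) = (i : ℕ) ∧ ((l : ℕ) : ℤ) = (j : ℕ) then δh k l else 0 := by
    intro k l
    simp only [hhigh, hlow, Fin.ext_iff]
    split_ifs <;> (try omega) <;> ring
  simp only [hv, hh, sum_sub_distrib]
  ring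

theorem flowNorm_eq_sum_abs (δv : Fin (n - 1) → Fin m → ℝ) (δh : Fin n → Fin (m - 1) → ℝ) :
    flowNorm δv δh = ∑ e, |gridFlow δv δh e| := by
  simp [flowNorm, gridFlow, Fintype.sum_sum_type, Fintype.sum_prod_type]

theorem gridFlow_vPart_hPart (δ : FlowIdx n m → ℝ) : gridFlow (vPart δ) (hPart δ) = δ := by
  funext e
  rcases e with ⟨k, l⟩ | ⟨k, l⟩ <;> rfl

def gridDist (p q : Pos n m) : ℕ :=
  (((p.1 : ℕ) : ℤ) - (q.1 : ℕ)).natAbs + (((p.2 : ℕ) : ℤ) - (q.2 : ℕ)).natAbs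

theorem groundL1_eq_gridDist (p q : Pos n m) : groundL1 p q = gridDist p q := by
  simp [groundL1, gridDist, Nat.cast_natAbs]

theorem groundL1_self (p : Pos n m) : groundL1 p p = 0 := by
  simp [groundL1]

theorem groundL1_comm (p q : Pos n m) : groundL1 p q = groundL1 q p := by
  simp only [groundL1, abs_sub_comm]

theorem groundL1_triangle (a b c : Pos n m) : groundL1 a c ≤ groundL1 a b + groundL1 b c := by
  simp only [groundL1]
  linarith [abs_sub_le ((a.1 : ℕ) : ℝ) (b.1 : ℕ) (c.1 : ℕ),
    abs_sub_le ((a.2 : ℕ) : ℝ) (b.2 : ℕ) (c.2 : ℕ)]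

theorem groundL1_gridTail_gridHead (e : FlowIdx n m) :
    groundL1 (gridTail e) (gridHead e) = 1 := by
  rw [groundL1_eq_gridDist]
  rcases e with ⟨k, l⟩ | ⟨k, l⟩ <;>
    simp [gridDist, gridTail, gridHead, vlow, vhigh, hlow, hhigh]

theorem exists_gridEdge_gridDist_lt {p q : Pos n m} (hpq : p ≠ q) : ∃ e : FlowIdx n m,
    (gridTail e = p ∧ gridDist (gridHead e) q < gridDist p q) ∨
      (gridHead e = p ∧ gridDist (gridTail e) q < gridDist p q) := by
  obtain ⟨⟨i, hi⟩, ⟨j, hj⟩⟩ := p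
  obtain ⟨⟨i', hi'⟩, ⟨j', hj'⟩⟩ := q
  simp only [gridDist, gridTail, gridHead, vlow, vhigh, hlow, hhigh, Prod.ext_iff,
    Fin.ext_iff]
  rcases lt_trichotomy i i' with h | rfl | h
  · exact ⟨.inl (⟨i, by omega⟩, ⟨j, hj⟩), .inl ⟨⟨rfl, rfl⟩, by simp; omega⟩⟩
  · have hjj : j ≠ j' := by
      rintro rfl
      exact hpq rfl
    rcases lt_or_gt_of_ne hjj with h | h
    · exact ⟨.inr (⟨i, hi⟩, ⟨j, by omega⟩), .inl ⟨⟨rfl, rfl⟩, by simp; omega⟩⟩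
    · exact ⟨.inr (⟨i, hi⟩, ⟨j - 1, by omega⟩), .inr ⟨⟨rfl, by simp; omega⟩, by simp; omega⟩⟩
  · exact ⟨.inl (⟨i - 1, by omega⟩, ⟨j, hj⟩), .inr ⟨⟨by simp; omega, rfl⟩, by simp; omega⟩⟩

theorem W1_eq_sInf_flowNorm (y y' : Fin n → Fin m → ℝ) (hy : ∀ i j, 0 ≤ y i j)
    (hy' : ∀ i j, 0 ≤ y' i j) :
    W1 y y' = sInf {c | ∃ (δv : Fin (n - 1) → Fin m → ℝ) (δh : Fin n → Fin (m - 1) → ℝ),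
      applyFlow y δv δh = y' ∧ flowNorm δv δh = c} := by
  have happly : ∀ δv δh, applyFlow y δv δh = y' ↔
      Function.uncurry y + divergence gridTail gridHead (gridFlow δv δh) =
        Function.uncurry y' := by
    intro δv δh
    simp only [funext_iff, Prod.forall, Pi.add_apply, Function.uncurry_apply_pair,
      applyFlow_eq_add_divergence]
  have hunit : ∀ p q : Pos n m, ∃ f : FlowIdx n m → ℝ, divergence gridTail gridHead f =
      Pi.single q 1 - Pi.single p 1 ∧ ∑ e, |f e| ≤ groundL1 p q := fun p q => by
    rw [groundL1_eq_gridDist]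
    exact exists_divergence_eq_single_sub_single gridDist
      (fun _ _ hpq => exists_gridEdge_gridDist_lt hpq) p q
  refine csInf_eq_csInf_of_forall_exists_le ?_ ?_
  · rintro _ ⟨P, hP, rfl⟩
    obtain ⟨δ, hδ, hnorm⟩ := exists_add_divergence_of_isTransportPlan hunit hP
    refine ⟨_, ⟨vPart δ, hPart δ, (happly _ _).2 ?_, rfl⟩, ?_⟩
    · rwa [gridFlow_vPart_hPart]
    · rwa [flowNorm_eq_sum_abs, gridFlow_vPart_hPart]
  · rintro _ ⟨δv, δh, hflow, rfl⟩
    obtain ⟨P, hP, hcost⟩ := exists_isTransportPlan_of_add_divergence groundL1_self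
      groundL1_triangle groundL1_comm (fun e => (groundL1_gridTail_gridHead e).le)
      (fun p => hy p.1 p.2) (fun q => hy' q.1 q.2) ((happly δv δh).1 hflow)
    exact ⟨_, ⟨P, hP, rfl⟩, by rwa [flowNorm_eq_sum_abs]⟩

end Grid

open scoped Pointwise in
theorem csInf_finsetSum {ι : Type*} (s : Finset ι) {A : ι → Set ℝ}
    (hne : ∀ i ∈ s, (A i).Nonempty) (hbdd : ∀ i ∈ s, BddBelow (A i)) :
    sInf (∑ i ∈ s, A i) = ∑ i ∈ s, sInf (A i) := by
  classical
  suffices (∑ i ∈ s, A i).Nonempty ∧ BddBelow (∑ i ∈ s, A i) ∧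
      sInf (∑ i ∈ s, A i) = ∑ i ∈ s, sInf (A i) from this.2.2
  induction s using Finset.induction_on with
  | empty => simp [← Set.singleton_zero]
  | insert a s ha ih =>
    simp only [mem_insert, forall_eq_or_imp] at hne hbdd
    obtain ⟨hne', hbdd', hs⟩ := ih hne.2 hbdd.2
    rw [sum_insert ha, sum_insert ha, csInf_add hne.1 hbdd.1 hne' hbdd', hs]
    exact ⟨hne.1.add hne', hbdd.1.add hbdd', rfl⟩

section Channels

variable {n m : ℕ}

def blockDiag (Q : Fin 3 → Pos n m → Pos n m → ℝ) (a b : Fin 3 × Pos n m) : ℝ :=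
  if a.1 = b.1 then Q a.1 a.2 b.2 else 0

theorem sum_blockDiag_right (Q : Fin 3 → Pos n m → Pos n m → ℝ) (a : Fin 3 × Pos n m) :
    ∑ b, blockDiag Q a b = ∑ q, Q a.1 a.2 q := by
  simp [blockDiag, Fintype.sum_prod_type, sum_ite_irrel]

theorem sum_blockDiag_left (Q : Fin 3 → Pos n m → Pos n m → ℝ) (b : Fin 3 × Pos n m) :
    ∑ a, blockDiag Q a b = ∑ p, Q b.1 p b.2 := by
  simp [blockDiag, Fintype.sum_prod_type, sum_ite_irrel]

theorem sum_blockDiag_mul (Q : Fin 3 → Pos n m → Pos n m → ℝ) (c : Pos n m → Pos n m → ℝ) :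
    ∑ a, ∑ b, blockDiag Q a b * c a.2 b.2 = ∑ K, ∑ p, ∑ q, Q K p q * c p q := by
  simp [blockDiag, Fintype.sum_prod_type, ite_mul, sum_ite_irrel]

theorem isCouplingC_blockDiag {x xt : Fin 3 → Fin n → Fin m → ℝ}
    {Q : Fin 3 → Pos n m → Pos n m → ℝ} (hQ : ∀ K, IsCoupling (x K) (xt K) (Q K)) :
    IsCouplingC x xt (blockDiag Q) := by
  refine ⟨fun a b => ?_, fun a => ?_, fun b => ?_, fun a b hab => if_neg hab⟩
  · unfold blockDiag
    split_ifs
    exacts [(hQ a.1).1 _ _, le_rfl]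
  · rw [sum_blockDiag_right, (hQ a.1).2.1]
  · rw [sum_blockDiag_left, (hQ b.1).2.2]

theorem IsCouplingC.eq_blockDiag {x xt : Fin 3 → Fin n → Fin m → ℝ}
    {P : Fin 3 × Pos n m → Fin 3 × Pos n m → ℝ} (hP : IsCouplingC x xt P) :
    P = blockDiag fun K p q => P (K, p) (K, q) := by
  funext a b
  unfold blockDiag
  split_ifs with h
  · obtain ⟨K, p⟩ := a
    obtain ⟨L, q⟩ := b
    obtain rfl : K = L := h
    rfl
  · exact hP.2.2.2 a b h

theorem IsCouplingC.isCoupling {x xt : Fin 3 → Fin n → Fin m → ℝ}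
    {P : Fin 3 × Pos n m → Fin 3 × Pos n m → ℝ} (hP : IsCouplingC x xt P) (K : Fin 3) :
    IsCoupling (x K) (xt K) fun p q => P (K, p) (K, q) := by
  refine ⟨fun p q => hP.1 _ _, fun p => ?_, fun q => ?_⟩
  · rw [← hP.2.1 (K, p)]
    conv_rhs => rw [hP.eq_blockDiag, sum_blockDiag_right]
  · rw [← hP.2.2.1 (K, q)]
    conv_rhs => rw [hP.eq_blockDiag, sum_blockDiag_left]

open scoped Pointwise in
theorem W1res_eq_sum_W1 (x xt : Fin 3 → Fin n → Fin m → ℝ)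
    (hx : ∀ K i j, 0 ≤ x K i j) (hxt : ∀ K i j, 0 ≤ xt K i j)
    (hmass : ∀ K, (∑ i, ∑ j, x K i j) = ∑ i, ∑ j, xt K i j) :
    W1res x xt = ∑ K, W1 (x K) (xt K) := by
  set A : Fin 3 → Set ℝ :=
    fun K => {c | ∃ P, IsCoupling (x K) (xt K) P ∧ transportCost groundL1 P = c}
  have hA : {c | ∃ P, IsCouplingC x xt P ∧ (∑ p, ∑ q, P p q * groundL1 p.2 q.2) = c} =
      ∑ K, A K := by
    ext c
    rw [Set.mem_finsetSum]
    constructor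
    · rintro ⟨P, hP, rfl⟩
      refine ⟨fun K => transportCost groundL1 fun p q => P (K, p) (K, q),
        fun {K} _ => ⟨_, hP.isCoupling K, rfl⟩, ?_⟩
      conv_rhs => rw [hP.eq_blockDiag, sum_blockDiag_mul]
      rfl
    · rintro ⟨g, hg, rfl⟩
      choose Q hQ hQg using fun K => hg (mem_univ K)
      refine ⟨blockDiag Q, isCouplingC_blockDiag hQ, ?_⟩
      rw [sum_blockDiag_mul]
      exact sum_congr rfl fun K _ => hQg K
  rw [W1res, hA, csInf_finsetSum]
  · rfl
  · intro K _
    obtain ⟨P, hP⟩ := exists_isTransportPlan (fun p : Pos n m => hx K p.1 p.2)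
      (fun q : Pos n m => hxt K q.1 q.2)
      (by simpa only [Fintype.sum_prod_type] using hmass K)
    exact ⟨_, P, hP, rfl⟩
  · refine fun K _ => ⟨0, ?_⟩
    rintro _ ⟨P, hP, rfl⟩
    exact sum_nonneg fun p _ => sum_nonneg fun q _ =>
      mul_nonneg (hP.1 p q) (by rw [groundL1_eq_gridDist]; positivity)

end Channels

theorem W1res_eq_sum_min_flowNorm_general {n m : ℕ}
    (x xt : Fin 3 → Fin n → Fin m → ℝ)
    (hx_nonneg : ∀ K i j, 0 ≤ x K i j) (hxt_nonneg : ∀ K i j, 0 ≤ xt K i j)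
    (hmass : ∀ K, (∑ i, ∑ j, x K i j) = ∑ i, ∑ j, xt K i j) :
    W1res x xt =
      ∑ K : Fin 3,
        sInf {c | ∃ (δv : Fin (n - 1) → Fin m → ℝ)
          (δh : Fin n → Fin (m - 1) → ℝ),
          applyFlow (x K) δv δh = xt K ∧ flowNorm δv δh = c} := by
  rw [W1res_eq_sum_W1 x xt hx_nonneg hxt_nonneg hmass]
  exact sum_congr rfl fun K _ => W1_eq_sInf_flowNorm (x K) (xt K) (hx_nonneg K) (hxt_nonneg K)

/-- For three-channel images `x, x̃` with nonnegative
entries, total mass one, and equal per-channel masses, the channel-restricted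
1-Wasserstein distance equals the sum over channels of the minimum flow-plan
`L1` norm: `W₁ʳᵉˢ(x, x̃) = Σ_K min{‖δᴷ‖₁ : Δ(xᴷ, δᴷ) = x̃ᴷ}`. -/
theorem W1res_eq_sum_min_flowNorm {n m : ℕ}
    (x xt : Fin 3 → Fin n → Fin m → ℝ)
    (hx_nonneg : ∀ K i j, 0 ≤ x K i j) (hxt_nonneg : ∀ K i j, 0 ≤ xt K i j)
    (hx_sum : (∑ K, ∑ i, ∑ j, x K i j) = 1)
    (hxt_sum : (∑ K, ∑ i, ∑ j, xt K i j) = 1)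
    (hmass : ∀ K, (∑ i, ∑ j, x K i j) = ∑ i, ∑ j, xt K i j) :
    W1res x xt =
      ∑ K : Fin 3,
        sInf {c | ∃ (δv : Fin (n - 1) → Fin m → ℝ)
          (δh : Fin n → Fin (m - 1) → ℝ),
          applyFlow (x K) δv δh = xt K ∧ flowNorm δv δh = c} :=
  W1res_eq_sum_min_flowNorm_general x xt hx_nonneg hxt_nonneg hmass
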